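/- Let R = [[R_S, 0],[0, R_R]] be the upper triangular factor of a canonical QR decomposition, block-partitioned according to H = H_S ⊕ H_R, with vanishing upper-right block R_P = 0. Let V = [[V_S, V_P],[V_Q, V_R]] be unitary and set N = VR with blocks N_S, N_P, N_Q, N_R. If N_Q = 0 then N_P = 0. -/

import Mathlib

open Matrix

/-- The rank of the matrix formed by the first `j` columns of `A`. -/
noncomputable def colRank (n : ℕ) (A : Matrix (Fin n) (Fin n) ℂ) (j : ℕ) : ℕ :=
  Module.finrank ℂ (Submodule.span ℂ ((fun l => Aᵀ l) '' {l : Fin n | (l : ℕ) < j}))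

/-- `R` satisfies the conditions of a canonical upper-triangular QR factor:
entries below row `ρ_j` (rank of the first `j` columns) in column `j` vanish,
and the first nonzero entry of each row is real and positive. -/
def IsCanonicalTriangular (n : ℕ) (R : Matrix (Fin n) (Fin n) ℂ) : Prop :=
  (∀ i j : Fin n, colRank n R ((j : ℕ) + 1) ≤ (i : ℕ) → R i j = 0) ∧
  (∀ i j : Fin n, (∀ j' : Fin n, j' < j → R i j' = 0) → R i j ≠ 0 →
    (R i j).im = 0 ∧ 0 < (R i j).re)

/-!
Conjugating by `finSumFinEquiv` turns everything into honest `2 × 2` block matrices, with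
`R = fromBlocks S 0 0 T`. If `S` is invertible, `N_Q = V_Q S = 0` forces `V_Q = 0`; a unitary
`V` that is block upper triangular has `V_Sᴴ V_S = 1` and `V_Sᴴ V_P = 0`, so `V_P = 0` and
`N_P = V_P T = 0`. If `S` is singular, the first `m` columns of `R` have rank `ρ_m < m`, and
the echelon condition of canonical form propagates this to make every later column of `R`
vanish, so `T = 0` and again `N_P = V_P T = 0`.
-/

namespace Matrix
variable {l o K : Type*} [Fintype l] [Fintype o] [DecidableEq l] [DecidableEq o]
  [CommRing K] [StarRing K]

theorem eq_zero_of_fromBlocks_zero₂₁_conjTranspose_mul_self_eq_one {A : Matrix l l K}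
    {B : Matrix l o K} {D : Matrix o o K} (hV : (fromBlocks A B 0 D)ᴴ * fromBlocks A B 0 D = 1) :
    B = 0 := by
  rw [fromBlocks_conjTranspose, fromBlocks_multiply, ← fromBlocks_one] at hV
  obtain ⟨hAA, hAB, -, -⟩ := fromBlocks_inj.1 hV
  simp only [conjTranspose_zero, Matrix.zero_mul, add_zero] at hAA hAB
  calc B = A * Aᴴ * B := by rw [mul_eq_one_comm.1 hAA, Matrix.one_mul]
    _ = 0 := by rw [Matrix.mul_assoc, hAB, Matrix.mul_zero]

theorem toBlocks₁₂_mul_fromBlocks_eq_zero {V : Matrix (l ⊕ o) (l ⊕ o) K} {S : Matrix l l K}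
    {T : Matrix o o K} (hV : Vᴴ * V = 1) (hQ : (V * fromBlocks S 0 0 T).toBlocks₂₁ = 0)
    (hST : IsUnit S ∨ T = 0) : (V * fromBlocks S 0 0 T).toBlocks₁₂ = 0 := by
  rw [← fromBlocks_toBlocks V, fromBlocks_multiply] at hQ ⊢
  simp only [toBlocks_fromBlocks₂₁, toBlocks_fromBlocks₁₂, Matrix.mul_zero, zero_add,
    add_zero] at hQ ⊢
  rcases hST with hS | rfl
  · obtain ⟨_⟩ := hS.nonempty_invertible
    have hC : V.toBlocks₂₁ = 0 :=
      mul_left_injective_of_invertible S (by simpa only [Matrix.zero_mul] using hQ)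
    rw [← fromBlocks_toBlocks V, hC] at hV
    rw [eq_zero_of_fromBlocks_zero₂₁_conjTranspose_mul_self_eq_one hV, Matrix.zero_mul]
  · exact Matrix.mul_zero _

end Matrix

section colRank

variable {n : ℕ} (A : Matrix (Fin n) (Fin n) ℂ)

theorem colRank_succ_of_lt {j : ℕ} (hj : j < n) :
    colRank n A (j + 1) = Module.finrank ℂ (Submodule.span ℂ
      (insert (Aᵀ ⟨j, hj⟩) ((fun l => Aᵀ l) '' {l : Fin n | (l : ℕ) < j}))) := by
  have hcols : {l : Fin n | (l : ℕ) < j + 1} = insert ⟨j, hj⟩ {l : Fin n | (l : ℕ) < j} := by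
    ext l; simp only [Set.mem_ofPred_eq, Set.mem_insert_iff, Fin.ext_iff]; omega
  rw [colRank, hcols, Set.image_insert_eq]

theorem colRank_succ_of_le {j : ℕ} (hj : n ≤ j) : colRank n A (j + 1) = colRank n A j := by
  have hcols : {l : Fin n | (l : ℕ) < j + 1} = {l : Fin n | (l : ℕ) < j} := by
    ext l; simp only [Set.mem_ofPred_eq]; omega
  rw [colRank, hcols, colRank]

theorem colRank_succ_le (j : ℕ) : colRank n A (j + 1) ≤ colRank n A j + 1 := by
  rcases lt_or_ge j n with hj | hj
  · rw [colRank_succ_of_lt A hj, Submodule.span_insert, add_comm]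
    refine (Submodule.finrank_add_le_finrank_add_finrank _ _).trans (Nat.add_le_add_right ?_ _)
    exact (finrank_span_le_card _).trans (by simp)
  · exact (colRank_succ_of_le A hj).le.trans (Nat.le_succ _)

theorem colRank_succ_of_col_eq_zero {j : ℕ} (h : ∀ l : Fin n, (l : ℕ) = j → ∀ i, A i l = 0) :
    colRank n A (j + 1) = colRank n A j := by
  rcases lt_or_ge j n with hj | hj
  · rw [colRank_succ_of_lt A hj, show Aᵀ ⟨j, hj⟩ = 0 from funext (h _ rfl),
      Submodule.span_insert_zero, colRank]
  · exact colRank_succ_of_le A hj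

end colRank

section finSumFin

variable {α : Type*} [Zero α] {m r : ℕ} {R : Matrix (Fin (m + r)) (Fin (m + r)) α}

theorem submatrix_finSumFinEquiv_eq_fromBlocks
    (hRP : ∀ (i : Fin m) (j : Fin r), R (Fin.castAdd r i) (Fin.natAdd m j) = 0)
    (hRQ : ∀ (i : Fin r) (j : Fin m), R (Fin.natAdd m i) (Fin.castAdd r j) = 0) :
    R.submatrix finSumFinEquiv finSumFinEquiv =
      fromBlocks (R.submatrix finSumFinEquiv finSumFinEquiv).toBlocks₁₁ 0 0
        (R.submatrix finSumFinEquiv finSumFinEquiv).toBlocks₂₂ := by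
  conv_lhs => rw [← fromBlocks_toBlocks (R.submatrix finSumFinEquiv finSumFinEquiv)]
  congr <;> ext i j
  · exact hRP i j
  · exact hRQ i j

theorem apply_eq_zero_of_lt_of_le
    (hRP : ∀ (i : Fin m) (j : Fin r), R (Fin.castAdd r i) (Fin.natAdd m j) = 0)
    {i j : Fin (m + r)} (hi : (i : ℕ) < m) (hj : m ≤ (j : ℕ)) : R i j = 0 := by
  induction i using Fin.addCases with
  | right i => simp at hi
  | left i =>
    induction j using Fin.addCases with
    | left j => rw [Fin.val_castAdd] at hj; omega
    | right j => exact hRP i j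

end finSumFin

theorem colRank_castAdd {m r : ℕ} (A : Matrix (Fin (m + r)) (Fin (m + r)) ℂ) :
    colRank (m + r) A m = (Set.range fun l : Fin m => Aᵀ (Fin.castAdd r l)).finrank ℂ := by
  rw [colRank, ← Fin.range_castLE (Nat.le_add_right m r), ← Set.range_comp]
  rfl

theorem colRank_castAdd_le {m r : ℕ} (A : Matrix (Fin (m + r)) (Fin (m + r)) ℂ) :
    colRank (m + r) A m ≤ m := by
  simpa [colRank_castAdd] using
    finrank_range_le_card (R := ℂ) fun l : Fin m => Aᵀ (Fin.castAdd r l)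

theorem eq_zero_of_colRank_lt {n m : ℕ} {R : Matrix (Fin n) (Fin n) ℂ}
    (hR : ∀ i j : Fin n, colRank n R ((j : ℕ) + 1) ≤ (i : ℕ) → R i j = 0)
    (hRP : ∀ i j : Fin n, (i : ℕ) < m → m ≤ (j : ℕ) → R i j = 0)
    (hlt : colRank n R m < m) (i : Fin n) {j : Fin n} (hj : m ≤ (j : ℕ)) : R i j = 0 := by
  -- While `ρ_{m+k} < m`, column `m + k` vanishes: rows above `m` by `hRP`, and the rows below
  -- lie below `ρ_{m+k+1} ≤ ρ_{m+k} + 1 ≤ m`; a zero column then leaves the rank unchanged.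
  have col_eq_zero : ∀ k, colRank n R (m + k) < m →
      ∀ l : Fin n, (l : ℕ) = m + k → ∀ i, R i l = 0 := by
    intro k hk l hl i
    rcases lt_or_ge (i : ℕ) m with hi | hi
    · exact hRP i l hi (by omega)
    · exact hR i l (by have := colRank_succ_le R (m + k); rw [hl]; omega)
  have colRank_lt : ∀ k, colRank n R (m + k) < m := by
    intro k
    induction k with
    | zero => exact hlt
    | succ k ih => rwa [← add_assoc, colRank_succ_of_col_eq_zero R (col_eq_zero k ih)]
  exact col_eq_zero _ (colRank_lt ((j : ℕ) - m)) j (by omega) i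

theorem isUnit_toBlocks₁₁_of_colRank_eq {m r : ℕ} {R : Matrix (Fin (m + r)) (Fin (m + r)) ℂ}
    (hRQ : ∀ (i : Fin r) (j : Fin m), R (Fin.natAdd m i) (Fin.castAdd r j) = 0)
    (h : colRank (m + r) R m = m) :
    IsUnit (R.submatrix finSumFinEquiv finSumFinEquiv).toBlocks₁₁ := by
  have hcols : LinearIndependent ℂ fun l : Fin m => Rᵀ (Fin.castAdd r l) := by
    rw [linearIndependent_iff_card_eq_finrank_span, ← colRank_castAdd, h, Fintype.card_fin]
  have hextend : Function.ExtendByZero.linearMap ℂ (Fin.castAdd r) ∘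
      (R.submatrix finSumFinEquiv finSumFinEquiv).toBlocks₁₁.col =
      fun l => Rᵀ (Fin.castAdd r l) := by
    funext l x
    induction x using Fin.addCases with
    | left x => simp [toBlocks₁₁, (Fin.castAdd_injective m r).extend_apply]
    | right x =>
      simp only [Function.comp_apply, Function.ExtendByZero.linearMap_apply]
      rw [Function.extend_apply']
      · exact (hRQ x l).symm
      · rintro ⟨y, hy⟩
        rw [Fin.ext_iff, Fin.val_castAdd, Fin.val_natAdd] at hy
        omega
  rw [← linearIndependent_cols_iff_isUnit]
  exact LinearIndependent.of_comp _ (hextend ▸ hcols)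

/-- if `R` is a canonical triangular factor with `R_P = 0` and
`N = VR` with `V` unitary has vanishing lower-left block, then `N` also has
vanishing upper-right block. -/
theorem NQ_zero_implies_NP_zero
    (m r : ℕ) (R V : Matrix (Fin (m + r)) (Fin (m + r)) ℂ)
    (hR : IsCanonicalTriangular (m + r) R)
    (hRP : ∀ (i : Fin m) (j : Fin r), R (Fin.castAdd r i) (Fin.natAdd m j) = 0)
    (hRQ : ∀ (i : Fin r) (j : Fin m), R (Fin.natAdd m i) (Fin.castAdd r j) = 0)
    (hV : Vᴴ * V = 1)
    (hNQ : ∀ (i : Fin r) (j : Fin m), (V * R) (Fin.natAdd m i) (Fin.castAdd r j) = 0) :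
    ∀ (i : Fin m) (j : Fin r), (V * R) (Fin.castAdd r i) (Fin.natAdd m j) = 0 := by
  set e : Fin m ⊕ Fin r ≃ Fin (m + r) := finSumFinEquiv
  have hRblocks := submatrix_finSumFinEquiv_eq_fromBlocks hRP hRQ
  have hVe : (V.submatrix e e)ᴴ * V.submatrix e e = 1 := by
    rw [conjTranspose_submatrix, submatrix_mul_equiv, hV, submatrix_one_equiv]
  have hNe : V.submatrix e e * R.submatrix e e = (V * R).submatrix e e :=
    submatrix_mul_equiv _ _ _ _ _
  have hST : IsUnit (R.submatrix e e).toBlocks₁₁ ∨ (R.submatrix e e).toBlocks₂₂ = 0 := by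
    rcases (colRank_castAdd_le R).eq_or_lt with hrank | hrank
    · exact .inl (isUnit_toBlocks₁₁_of_colRank_eq hRQ hrank)
    · exact .inr <| ext fun i j => eq_zero_of_colRank_lt hR.1
        (fun _ _ => apply_eq_zero_of_lt_of_le hRP) hrank _ (by simp [e])
  have hNP := toBlocks₁₂_mul_fromBlocks_eq_zero hVe
    (by rw [← hRblocks, hNe]; ext i j; exact hNQ i j) hST
  rw [← hRblocks, hNe] at hNP
  exact fun i j => congrFun (congrFun hNP i) j
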